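/- arXiv:1411.5235 — 7 statements merged into one kernel-verified Lean document; each statement's English description precedes it below -/
import Mathlib

section
/- Let K be symmetric positive definite, G^T injective, Q symmetric positive definite, C symmetric positive semi-definite, and η, ζ, k > 0 with S̄ = G K⁻¹ G^T. Define R = -(1/(ση)) S̄ + (1/(ση²)) S̄ ((1/η) S̄ + (1/ζ) Q)⁻¹ S̄ - (k/σ) C. If σ < 0 then R is positive definite; if 0 < σ < 1 then R is negative definite. In particular R is invertible. -/
/-!
Factoring out `-1/σ`, `R = -(1/σ) • (A - A (A + B)⁻¹ A + k C)` with `A = η⁻¹ S`, `B = ζ⁻¹ Q`.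
Since `Gᵀ` is injective, `S = G K⁻¹ Gᵀ` and hence `A` are positive definite, and by the Woodbury
identity `A - A (A + B)⁻¹ A = (A⁻¹ + B⁻¹)⁻¹` is positive definite too. Adding `k C ≥ 0` keeps it
so, and the sign of `σ` decides the sign of `R`.
-/

open Matrix

namespace Matrix

variable {ι : Type*} [Fintype ι]

theorem neg_smul_add_smul_mul_sub_smul_eq_neg_smul {K : Type*} [Field K] {σ η k : K} (hσ : σ ≠ 0)
    (hη : η ≠ 0) (S M C : Matrix ι ι K) :
    -(1 / (σ * η)) • S + (1 / (σ * η ^ 2)) • (S * M * S) - (k / σ) • C =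
      -(1 / σ) • ((1 / η) • S - (1 / η) • S * M * (1 / η) • S + k • C) := by
  simp only [Matrix.smul_mul, Matrix.mul_smul, smul_smul, smul_sub, smul_add]
  match_scalars <;> field_simp

variable [DecidableEq ι]

theorem sub_mul_inv_add_mul_eq_inv_add_inv {α : Type*} [CommRing α] {A B : Matrix ι ι α}
    (hA : IsUnit A) (hB : IsUnit B) (hAB : IsUnit (A + B)) :
    A - A * (A + B)⁻¹ * A = (A⁻¹ + B⁻¹)⁻¹ := by
  have hA' := (isUnit_iff_isUnit_det A).mp hA
  have hB' := (isUnit_iff_isUnit_det B).mp hB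
  have woodbury := add_mul_mul_inv_eq_sub A⁻¹ 1 B⁻¹ 1 (isUnit_nonsing_inv_iff.mpr hA)
    (isUnit_nonsing_inv_iff.mpr hB)
    (by rwa [nonsing_inv_nonsing_inv _ hA', nonsing_inv_nonsing_inv _ hB', Matrix.mul_one,
      Matrix.one_mul, add_comm])
  simpa [nonsing_inv_nonsing_inv _ hA', nonsing_inv_nonsing_inv _ hB', add_comm B] using
    woodbury.symm

theorem PosDef.sub_mul_inv_add_mul {K : Type*} [Field K] [PartialOrder K] [StarRing K]
    [AddLeftMono K] {A B : Matrix ι ι K} (hA : A.PosDef) (hB : B.PosDef) :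
    (A - A * (A + B)⁻¹ * A).PosDef := by
  rw [sub_mul_inv_add_mul_eq_inv_add_inv hA.isUnit hB.isUnit (hA.add hB).isUnit]
  exact (hA.inv.add hB.inv).inv

end Matrix

theorem stmt3 {n m : ℕ} (K : Matrix (Fin n) (Fin n) ℝ) (G : Matrix (Fin m) (Fin n) ℝ)
    (Q C : Matrix (Fin m) (Fin m) ℝ) (η ζ k σ : ℝ)
    (hK : K.PosDef) (hG : ∀ p : Fin m → ℝ, Gᵀ *ᵥ p = 0 → p = 0)
    (hQ : Q.PosDef) (hC : C.PosSemidef)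
    (hη : 0 < η) (hζ : 0 < ζ) (hk : 0 < k)
    (hσ : σ < 0 ∨ (0 < σ ∧ σ < 1))
    (S R : Matrix (Fin m) (Fin m) ℝ)
    (hS : S = G * K⁻¹ * Gᵀ)
    (hR : R = -(1 / (σ * η)) • S
        + (1 / (σ * η ^ 2)) • (S * ((1 / η) • S + (1 / ζ) • Q)⁻¹ * S)
        - (k / σ) • C) :
    (σ < 0 → R.PosDef) ∧ ((0 < σ ∧ σ < 1) → (-R).PosDef) ∧ IsUnit R.det := by
  have hG_inj : Function.Injective G.vecMul := fun p q hpq =>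
    sub_eq_zero.mp (hG _ (by rw [mulVec_transpose, sub_vecMul]; exact sub_eq_zero.mpr hpq))
  have hS_pos : S.PosDef := by
    simpa [hS] using hK.inv.mul_mul_conjTranspose_same hG_inj
  set P := (1 / η) • S - (1 / η) • S * ((1 / η) • S + (1 / ζ) • Q)⁻¹ * (1 / η) • S + k • C
  have hP : P.PosDef := ((hS_pos.smul (by positivity)).sub_mul_inv_add_mul
    (hQ.smul (by positivity))).add_posSemidef (hC.smul hk.le)
  have hσ0 : σ ≠ 0 := by rcases hσ with h | ⟨h, -⟩ <;> [exact h.ne; exact h.ne']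
  have hRP : R = -(1 / σ) • P :=
    hR.trans (neg_smul_add_smul_mul_sub_smul_eq_neg_smul hσ0 hη.ne' _ _ _)
  have hR_neg : σ < 0 → R.PosDef := fun h => hRP ▸ hP.smul (by simpa using h)
  have hR_pos : 0 < σ ∧ σ < 1 → (-R).PosDef := fun h => by
    simpa [hRP] using hP.smul (one_div_pos.mpr h.1)
  refine ⟨hR_neg, hR_pos, (isUnit_iff_isUnit_det R).mp ?_⟩
  rcases hσ with h | h
  · exact (hR_neg h).isUnit
  · exact (IsUnit.neg_iff R).mp (hR_pos h).isUnit
end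

section
/- Under the same hypotheses, with R as defined, the matrix R + kC equals -(1/(ση)) 𝒢 + (1 - 1/σ) k C where 𝒢 = S̄ - S̄(S̄ + (η/ζ)Q)⁻¹ S̄; consequently R + kC is positive definite when σ < 0 and negative definite when σ ∈ (0,1), so R + kC is invertible. -/
/-!
Writing `M = (η/ζ) Q`, the inner inverse in `R` is `η (S̄ + M)⁻¹`, so `R + kC` is, by plain
algebra, `-(1/(ση)) 𝒢 + (1 - 1/σ) k C`. Since `S̄ = G K⁻¹ Gᵀ` and `M` are positive definite, so is
`𝒢 = S̄ - S̄ (S̄ + M)⁻¹ S̄ = (S̄⁻¹ + M⁻¹)⁻¹`. The sign of `σ` then fixes the signs of both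
coefficients: for `σ < 0` they are positive and nonnegative, for `σ ∈ (0,1)` negative and
nonpositive.
-/

open Matrix

lemma Matrix.inv_smul_of_ne_zero {ι K : Type*} [Fintype ι] [DecidableEq ι] [Field K] {c : K}
    (hc : c ≠ 0) {A : Matrix ι ι K} (hA : IsUnit A.det) : (c • A)⁻¹ = c⁻¹ • A⁻¹ :=
  inv_eq_right_inv <| by rw [smul_mul_smul_comm, mul_inv_cancel₀ hc, one_smul, mul_nonsing_inv _ hA]

namespace Matrix.PosDef

variable {ι : Type*} [Fintype ι]

lemma mul_mul_transpose_same {κ R : Type*} [Fintype κ] [CommRing R] [PartialOrder R]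
    [StarRing R] [TrivialStar R] {A : Matrix κ κ R} (hA : A.PosDef) {B : Matrix ι κ R}
    (hB : ∀ p : ι → R, Bᵀ *ᵥ p = 0 → p = 0) : (B * A * Bᵀ).PosDef := by
  have hinj : Function.Injective B.vecMul := fun x y hxy =>
    sub_eq_zero.mp <| hB _ <| by rw [mulVec_transpose, sub_vecMul]; exact sub_eq_zero.mpr hxy
  simpa [conjTranspose_eq_transpose_of_trivial] using hA.mul_mul_conjTranspose_same hinj

variable [DecidableEq ι] {K : Type*} [Field K] [PartialOrder K] [StarRing K] [StarOrderedRing K]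

-- `S - S (S + M)⁻¹ S = M (S + M)⁻¹ S`, which is inverse to `S⁻¹ + M⁻¹`.
lemma sub_mul_inv_add_mul_s4 {S M : Matrix ι ι K} (hS : S.PosDef) (hM : M.PosDef) :
    (S - S * (S + M)⁻¹ * S).PosDef := by
  have hSS : S⁻¹ * S = 1 := nonsing_inv_mul S ((isUnit_iff_isUnit_det S).mp hS.isUnit)
  have hMM : M⁻¹ * M = 1 := nonsing_inv_mul M ((isUnit_iff_isUnit_det M).mp hM.isUnit)
  have hN : (S + M) * (S + M)⁻¹ = 1 :=
    mul_nonsing_inv _ ((isUnit_iff_isUnit_det _).mp (hS.add hM).isUnit)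
  have hsub : S - S * (S + M)⁻¹ * S = M * (S + M)⁻¹ * S := by
    calc S - S * (S + M)⁻¹ * S = (S + M) * (S + M)⁻¹ * S - S * (S + M)⁻¹ * S := by
          rw [hN, one_mul]
      _ = M * (S + M)⁻¹ * S := by noncomm_ring
  have hinv : (S⁻¹ + M⁻¹) * (S - S * (S + M)⁻¹ * S) = 1 := by
    calc (S⁻¹ + M⁻¹) * (S - S * (S + M)⁻¹ * S)
        = S⁻¹ * ((S + M) * (S + M)⁻¹ * S) - S⁻¹ * S * ((S + M)⁻¹ * S)
          + M⁻¹ * M * ((S + M)⁻¹ * S) := by rw [hsub]; noncomm_ring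
      _ = 1 := by rw [hN, one_mul, hSS, hMM]; noncomm_ring
  rw [← inv_eq_right_inv hinv]
  exact (hS.inv.add hM.inv).inv

end Matrix.PosDef

theorem stmt4 {n m : ℕ} (K : Matrix (Fin n) (Fin n) ℝ) (G : Matrix (Fin m) (Fin n) ℝ)
    (Q C : Matrix (Fin m) (Fin m) ℝ) (η ζ k σ : ℝ)
    (hK : K.PosDef) (hG : ∀ p : Fin m → ℝ, Gᵀ *ᵥ p = 0 → p = 0)
    (hQ : Q.PosDef) (hC : C.PosSemidef)
    (hη : 0 < η) (hζ : 0 < ζ) (hk : 0 < k)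
    (hσ : σ < 0 ∨ (0 < σ ∧ σ < 1))
    (S R 𝒢 : Matrix (Fin m) (Fin m) ℝ)
    (hS : S = G * K⁻¹ * Gᵀ)
    (hR : R = -(1 / (σ * η)) • S
        + (1 / (σ * η ^ 2)) • (S * ((1 / η) • S + (1 / ζ) • Q)⁻¹ * S)
        - (k / σ) • C)
    (h𝒢 : 𝒢 = S - S * (S + (η / ζ) • Q)⁻¹ * S) :
    R + k • C = -(1 / (σ * η)) • 𝒢 + ((1 - 1 / σ) * k) • C ∧
    (σ < 0 → (R + k • C).PosDef) ∧
    ((0 < σ ∧ σ < 1) → (-(R + k • C)).PosDef) ∧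
    IsUnit (R + k • C).det := by
  have hS_pd : S.PosDef := hS ▸ hK.inv.mul_mul_transpose_same hG
  have hM_pd : ((η / ζ) • Q).PosDef := hQ.smul (div_pos hη hζ)
  have h𝒢_pd : 𝒢.PosDef := h𝒢 ▸ hS_pd.sub_mul_inv_add_mul_s4 hM_pd
  have hinner : ((1 / η) • S + (1 / ζ) • Q)⁻¹ = η • (S + (η / ζ) • Q)⁻¹ := by
    have hscale : (1 / η) • S + (1 / ζ) • Q = η⁻¹ • (S + (η / ζ) • Q) := by
      rw [smul_add, smul_smul]
      congr 2 <;> field_simp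
    rw [hscale, inv_smul_of_ne_zero (inv_ne_zero hη.ne')
      ((isUnit_iff_isUnit_det _).mp (hS_pd.add hM_pd).isUnit), inv_inv]
  have hsum : R + k • C = -(1 / (σ * η)) • 𝒢 + ((1 - 1 / σ) * k) • C := by
    rw [hR, hinner, h𝒢, mul_smul_comm, smul_mul_assoc]
    have hσ0 : σ ≠ 0 := by rcases hσ with h | h <;> [exact h.ne; exact h.1.ne']
    match_scalars <;> field_simp
    ring
  have hneg : σ < 0 → (R + k • C).PosDef := by
    intro h
    have hc : 0 < -(1 / (σ * η)) := neg_pos.mpr (one_div_neg.mpr (mul_neg_of_neg_of_pos h hη))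
    have hd : 0 ≤ (1 - 1 / σ) * k := mul_nonneg (by linarith [one_div_neg.mpr h]) hk.le
    exact hsum ▸ (h𝒢_pd.smul hc).add_posSemidef (hC.smul hd)
  have hpos : (0 < σ ∧ σ < 1) → (-(R + k • C)).PosDef := by
    rintro ⟨h0, h1⟩
    have hc : 0 < 1 / (σ * η) := by positivity
    have hd : 0 ≤ -((1 - 1 / σ) * k) :=
      neg_nonneg.mpr (mul_nonpos_of_nonpos_of_nonneg (by linarith [one_lt_one_div h0 h1]) hk.le)
    rw [hsum, neg_add, ← neg_smul, ← neg_smul, neg_neg]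
    exact (h𝒢_pd.smul hc).add_posSemidef (hC.smul hd)
  refine ⟨hsum, hneg, hpos, ?_⟩
  rcases hσ with h | h
  · exact (isUnit_iff_isUnit_det _).mp (hneg h).isUnit
  · exact (isUnit_iff_isUnit_det _).mp (by simpa using (hpos h).isUnit.neg)
end

section
/- Consider the 3×3 block matrix 𝒜 = [[ηK, G^T, G^T],[G, -kC, 0],[G, 0, -ζ⁻¹Q]] and the lower block triangular preconditioner 𝒫 = [[ηK, 0, 0],[G, ℛ, 0],[G, 𝒯, 𝒮]] with ℛ = -(1/(ση)) S̄ + (1/(ση²)) S̄ ((1/η)S̄ + (1/ζ)Q)⁻¹ S̄ - (k/σ)C, 𝒮 = -((1/η) S̄ + ζ⁻¹ Q), 𝒯 = -(1/η) S̄, where S̄ = G K⁻¹ G^T. Then the generalized eigenvalue problem 𝒜 x = Φ 𝒫 x has only two distinct eigenvalues, Φ = 1 and Φ = σ, and eigenvectors for Φ = 1 have the form (u, 0, 0). -/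
/-!
Write `A = S̄/η` and `B = Q/ζ`. Then `-σℛ = (A - A(A + B)⁻¹A) + kC`, a positive definite
matrix plus a positive semidefinite one. For `Φ ≠ 1`, the first and third block rows give
`(A + B) p_c = -A p`, and with this the second row reduces to `Φ ℛ p = σ ℛ p`; so if also
`Φ ≠ σ` then `ℛ p = 0`, and successively `p`, `p_c` and `u` vanish. For `Φ = 1`, the first row
gives `p_c = -p` because `ker Gᵀ = 0`, and the second row gives `(ℛ + kC) p = 0`, that is
`(A - A(A + B)⁻¹A + k(1 - σ)C) p = 0`. Since `σ < 1`, this matrix is positive definite, so `p = 0`.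
-/

open Matrix

namespace Matrix.PosDef

variable {ι 𝕜 : Type*} [Fintype ι] [DecidableEq ι] [Field 𝕜] [PartialOrder 𝕜] [StarRing 𝕜]

/-- `A - A (A + B)⁻¹ A` is the parallel sum `A (A + B)⁻¹ B = (A⁻¹ + B⁻¹)⁻¹`. -/
theorem sub_mul_inv_add_mul_s5 [StarOrderedRing 𝕜] {A B : Matrix ι ι 𝕜} (hA : A.PosDef)
    (hB : B.PosDef) : (A - A * (A + B)⁻¹ * A).PosDef := by
  have hAu := (isUnit_iff_isUnit_det A).mp hA.isUnit
  have hBu := (isUnit_iff_isUnit_det B).mp hB.isUnit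
  have hABu := (isUnit_iff_isUnit_det (A + B)).mp (hA.add hB).isUnit
  have hparallel : A - A * (A + B)⁻¹ * A = A * (A + B)⁻¹ * B := by
    rw [sub_eq_iff_eq_add', Matrix.mul_assoc, Matrix.mul_assoc, ← Matrix.mul_add,
      ← Matrix.mul_add, nonsing_inv_mul _ hABu, Matrix.mul_one]
  have hinv : (A⁻¹ + B⁻¹)⁻¹ = A - A * (A + B)⁻¹ * A := by
    refine inv_eq_left_inv ?_
    calc (A - A * (A + B)⁻¹ * A) * (A⁻¹ + B⁻¹) = A * (A + B)⁻¹ * ((A + B) * A⁻¹) := by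
          rw [hparallel, Matrix.mul_assoc _ B, Matrix.mul_add, mul_nonsing_inv B hBu,
            Matrix.add_mul, mul_nonsing_inv A hAu, add_comm (B * A⁻¹)]
      _ = 1 := by
          rw [Matrix.mul_assoc A, nonsing_inv_mul_cancel_left _ _ hABu, mul_nonsing_inv _ hAu]
  exact hinv ▸ (hA.inv.add hB.inv).inv

theorem eq_zero_of_mulVec_eq_zero {N : Matrix ι ι 𝕜} (hN : N.PosDef) {v : ι → 𝕜}
    (h : N *ᵥ v = 0) : v = 0 :=
  mulVec_injective_of_isUnit hN.isUnit (h.trans (mulVec_zero N).symm)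

end Matrix.PosDef

section Preconditioner

variable {ι κ : Type*} [Fintype ι] {Φ σ k : ℝ}

theorem posDef_mul_inv_mul_transpose [Fintype κ] [DecidableEq κ] {K : Matrix κ κ ℝ}
    {G : Matrix ι κ ℝ} (hK : K.PosDef) (hG : ∀ p, Gᵀ *ᵥ p = 0 → p = 0) : (G * K⁻¹ * Gᵀ).PosDef := by
  have hGinj : Function.Injective G.vecMul := fun a b hab =>
    sub_eq_zero.mp <| hG (a - b) <| by
      rw [mulVec_transpose, sub_vecMul]
      exact sub_eq_zero.mpr hab
  simpa only [conjTranspose_eq_transpose_of_trivial] using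
    hK.inv.mul_mul_conjTranspose_same hGinj

theorem neg_smul_eq_parallel_add [DecidableEq ι] {S Q C R : Matrix ι ι ℝ} {η ζ : ℝ}
    (hσ : σ ≠ 0) (hR : R = -(1 / (σ * η)) • S
        + (1 / (σ * η ^ 2)) • (S * ((1 / η) • S + (1 / ζ) • Q)⁻¹ * S)
        - (k / σ) • C) :
    (-σ) • R = ((1 / η) • S - (1 / η) • S * ((1 / η) • S + ζ⁻¹ • Q)⁻¹ * ((1 / η) • S))
      + k • C := by
  subst hR
  simp only [one_div, Matrix.smul_mul, Matrix.mul_smul, smul_smul]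
  match_scalars <;> field_simp

theorem sub_one_smul_mulVec_eq [Fintype κ] [DecidableEq κ] {K : Matrix κ κ ℝ}
    {G : Matrix ι κ ℝ} {η : ℝ} {u : κ → ℝ} {w : ι → ℝ} (hK : IsUnit K.det) (hη : η ≠ 0)
    (hKu : ((Φ - 1) * η) • (K *ᵥ u) = Gᵀ *ᵥ w) :
    (Φ - 1) • (G *ᵥ u) = ((1 / η) • (G * K⁻¹ * Gᵀ)) *ᵥ w := by
  rw [smul_mulVec, ← mulVec_mulVec, ← mulVec_mulVec, ← hKu, mulVec_smul, mulVec_mulVec,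
    nonsing_inv_mul _ hK, one_mulVec, mulVec_smul, smul_smul]
  field_simp

theorem add_mulVec_eq_neg_mulVec {A B : Matrix ι ι ℝ} {x p pc : ι → ℝ} (hΦ : Φ ≠ 1)
    (hx : (Φ - 1) • x = A *ᵥ (p + pc))
    (h3 : x - B *ᵥ pc = Φ • (x - A *ᵥ p - (A + B) *ᵥ pc)) :
    (A + B) *ᵥ pc = -(A *ᵥ p) := by
  have hBpc : (1 - Φ) • ((1 - Φ) • x - B *ᵥ pc) = 0 := by
    rw [mulVec_add] at hx
    rw [add_mulVec] at h3
    linear_combination (norm := module) h3 + Φ • hx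
  have hBx : (1 - Φ) • x = B *ᵥ pc :=
    sub_eq_zero.mp ((smul_eq_zero.mp hBpc).resolve_left (sub_ne_zero.mpr hΦ.symm))
  rw [mulVec_add] at hx
  rw [add_mulVec]
  linear_combination (norm := module) -hx - hBx

theorem smul_mulVec_eq_of_ne_one [DecidableEq ι] {A B C R : Matrix ι ι ℝ} {x p pc : ι → ℝ}
    (hM : IsUnit (A + B).det) (hRD : (-σ) • R = (A - A * (A + B)⁻¹ * A) + k • C)
    (hx : (Φ - 1) • x = A *ᵥ (p + pc)) (hpc : (A + B) *ᵥ pc = -(A *ᵥ p))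
    (h2 : x - k • (C *ᵥ p) = Φ • (x + R *ᵥ p)) :
    Φ • (R *ᵥ p) = σ • (R *ᵥ p) := by
  have hApc : A *ᵥ pc = -((A * (A + B)⁻¹ * A) *ᵥ p) := by
    have : pc = (A + B)⁻¹ *ᵥ ((A + B) *ᵥ pc) := by
      rw [mulVec_mulVec, nonsing_inv_mul _ hM, one_mulVec]
    rw [this, hpc, mulVec_neg, mulVec_neg, mulVec_mulVec, mulVec_mulVec]
  have hRp := congrArg (· *ᵥ p) hRD
  simp only [smul_mulVec, add_mulVec, sub_mulVec] at hRp
  rw [mulVec_add] at hx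
  linear_combination (norm := module) -h2 + hRp - hx - hApc

theorem eq_zero_of_eigenvalue_ne_one_of_ne [DecidableEq ι] {A B C R : Matrix ι ι ℝ}
    {x p pc : ι → ℝ} (hA : A.PosDef) (hB : B.PosDef) (hC : C.PosSemidef) (hk : 0 < k)
    (hΦ1 : Φ ≠ 1) (hΦσ : Φ ≠ σ)
    (hRD : (-σ) • R = (A - A * (A + B)⁻¹ * A) + k • C) (hx : (Φ - 1) • x = A *ᵥ (p + pc))
    (h2 : x - k • (C *ᵥ p) = Φ • (x + R *ᵥ p))
    (h3 : x - B *ᵥ pc = Φ • (x - A *ᵥ p - (A + B) *ᵥ pc)) : p = 0 ∧ pc = 0 := by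
  have hpc := add_mulVec_eq_neg_mulVec hΦ1 hx h3
  have hRp : R *ᵥ p = 0 := by
    have := smul_mulVec_eq_of_ne_one (hA.add hB).det_pos.ne'.isUnit hRD hx hpc h2
    refine (smul_eq_zero.mp ?_).resolve_left (sub_ne_zero.mpr hΦσ)
    rw [sub_smul, this, sub_self]
  have hp : p = 0 :=
    ((hA.sub_mul_inv_add_mul_s5 hB).add_posSemidef (hC.smul hk.le)).eq_zero_of_mulVec_eq_zero
      (by rw [← hRD, smul_mulVec, hRp, smul_zero])
  exact ⟨hp, (hA.add hB).eq_zero_of_mulVec_eq_zero (by rw [hpc, hp, mulVec_zero, neg_zero])⟩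

theorem eq_zero_of_eigenvalue_one [DecidableEq ι] {G : Matrix ι κ ℝ} {D C R : Matrix ι ι ℝ}
    {p pc : ι → ℝ}
    (hG : ∀ p, Gᵀ *ᵥ p = 0 → p = 0) (hD : D.PosDef) (hC : C.PosSemidef) (hk : 0 < k)
    (hσ : σ < 1) (hRD : (-σ) • R = D + k • C) (h1 : Gᵀ *ᵥ (p + pc) = 0)
    (h2 : R *ᵥ p + k • (C *ᵥ p) = 0) : p = 0 ∧ pc = 0 := by
  have hDC : (D + (k * (1 - σ)) • C).PosDef :=
    hD.add_posSemidef (hC.smul (mul_nonneg hk.le (sub_nonneg.mpr hσ.le)))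
  have hRp := congrArg (· *ᵥ p) hRD
  simp only [smul_mulVec, add_mulVec] at hRp
  have hp : p = 0 := hDC.eq_zero_of_mulVec_eq_zero <| by
    rw [add_mulVec, smul_mulVec]
    linear_combination (norm := module) -hRp - σ • h2
  refine ⟨hp, ?_⟩
  simpa [hp] using hG _ h1

end Preconditioner

/-- The generalized eigenvalue problem 𝒜 x = Φ 𝒫 x, written blockwise for
x = (u, p, p_c), for the exact lower block-triangular preconditioner. -/
theorem stmt5 {n m : ℕ} (K : Matrix (Fin n) (Fin n) ℝ) (G : Matrix (Fin m) (Fin n) ℝ)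
    (Q C : Matrix (Fin m) (Fin m) ℝ) (η ζ k σ : ℝ)
    (hK : K.PosDef) (hG : ∀ p : Fin m → ℝ, Gᵀ *ᵥ p = 0 → p = 0)
    (hQ : Q.PosDef) (hC : C.PosSemidef)
    (hη : 0 < η) (hζ : 0 < ζ) (hk : 0 < k)
    (hσ : σ < 0 ∨ (0 < σ ∧ σ < 1))
    (S R 𝒮 𝒯 : Matrix (Fin m) (Fin m) ℝ)
    (hS : S = G * K⁻¹ * Gᵀ)
    (hR : R = -(1 / (σ * η)) • S
        + (1 / (σ * η ^ 2)) • (S * ((1 / η) • S + (1 / ζ) • Q)⁻¹ * S)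
        - (k / σ) • C)
    (h𝒮 : 𝒮 = -((1 / η) • S + ζ⁻¹ • Q))
    (h𝒯 : 𝒯 = -(1 / η) • S)
    (Φ : ℝ) (u : Fin n → ℝ) (p pc : Fin m → ℝ)
    (hx : ¬(u = 0 ∧ p = 0 ∧ pc = 0))
    (h1 : η • (K *ᵥ u) + Gᵀ *ᵥ p + Gᵀ *ᵥ pc = Φ • (η • (K *ᵥ u)))
    (h2 : G *ᵥ u - k • (C *ᵥ p) = Φ • (G *ᵥ u + R *ᵥ p))
    (h3 : G *ᵥ u - ζ⁻¹ • (Q *ᵥ pc) = Φ • (G *ᵥ u + 𝒯 *ᵥ p + 𝒮 *ᵥ pc)) :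
    (Φ = 1 ∨ Φ = σ) ∧ (Φ = 1 → p = 0 ∧ pc = 0) := by
  have hσ0 : σ ≠ 0 := by rcases hσ with h | ⟨h, -⟩ <;> [exact h.ne; exact h.ne']
  have hσ1 : σ < 1 := by rcases hσ with h | ⟨-, h⟩ <;> linarith
  have hKu : ((Φ - 1) * η) • (K *ᵥ u) = Gᵀ *ᵥ (p + pc) := by
    rw [mulVec_add]
    linear_combination (norm := module) -h1
  have hGu := sub_one_smul_mulVec_eq hK.det_pos.ne'.isUnit hη.ne' hKu
  have hRD := neg_smul_eq_parallel_add hσ0 hR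
  rw [← hS] at hGu
  set A := (1 / η) • S
  set B := ζ⁻¹ • Q
  have hA : A.PosDef := (hS ▸ posDef_mul_inv_mul_transpose hK hG).smul (by positivity)
  have hB : B.PosDef := hQ.smul (by positivity)
  refine ⟨?_, ?_⟩
  · by_contra! hΦ
    have h3' : G *ᵥ u - B *ᵥ pc = Φ • (G *ᵥ u - A *ᵥ p - (A + B) *ᵥ pc) := by
      rw [smul_mulVec, h3, h𝒯, h𝒮, neg_smul, neg_mulVec, neg_mulVec]
      module
    obtain ⟨hp, hpc⟩ := eq_zero_of_eigenvalue_ne_one_of_ne hA hB hC hk hΦ.1 hΦ.2 hRD hGu h2 h3'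
    have hu : u = 0 := hK.eq_zero_of_mulVec_eq_zero <|
      (smul_eq_zero.mp (by rw [hKu, hp, hpc, add_zero, mulVec_zero])).resolve_left
        (mul_ne_zero (sub_ne_zero.mpr hΦ.1) hη.ne')
    exact hx ⟨hu, hp, hpc⟩
  · rintro rfl
    refine eq_zero_of_eigenvalue_one hG (hA.sub_mul_inv_add_mul_s5 hB) hC hk hσ1 hRD ?_ ?_
    · simpa using hKu.symm
    · linear_combination (norm := module) -h2
end

section
/- With the preconditioner 𝒫 of Theorem (exact lower triangular preconditioner), if 𝒜 x = 1·𝒫 x for x = (u, p, p_c), then p = -p_c, (ℛ + kC) p = 0, and since ℛ + kC is invertible one has p = p_c = 0. -/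
/-!
The first block row gives `Gᵀ (p + p_c) = 0`, the second `(ℛ + kC) p = 0`. Testing the latter
against `p` and multiplying by `σ η²` gives `b - η a + k η² (σ - 1) c = 0`, where `a = pᵀ S p`,
`b = (S p)ᵀ T⁻¹ (S p)`, `c = pᵀ C p` and `T = S / η + Q / ζ`. Because `T` exceeds `S / η` by the
positive definite `Q / ζ`, one has `b < η a` as soon as `p ≠ 0`, while `(σ - 1) c ≤ 0`; hence `p = 0`.
-/

open Matrix

section

variable {ι : Type*} [Fintype ι]

lemma Matrix.IsHermitian.dotProduct_mulVec_comm {A : Matrix ι ι ℝ} (hA : A.IsHermitian)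
    (x y : ι → ℝ) : x ⬝ᵥ (A *ᵥ y) = (A *ᵥ x) ⬝ᵥ y := by
  rw [dotProduct_mulVec, ← mulVec_transpose, ← conjTranspose_eq_transpose_of_trivial, hA.eq]

lemma Matrix.PosDef.mul_inv_mul_transpose {κ : Type*} [Fintype κ] [DecidableEq κ]
    {K : Matrix κ κ ℝ} (hK : K.PosDef) {G : Matrix ι κ ℝ}
    (hG : ∀ p, Gᵀ *ᵥ p = 0 → p = 0) : (G * K⁻¹ * Gᵀ).PosDef := by
  have hinj : Function.Injective G.vecMul := fun x y hxy =>
    sub_eq_zero.mp <| hG _ <| by rw [mulVec_transpose, sub_vecMul]; exact sub_eq_zero.mpr hxy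
  simpa [conjTranspose_eq_transpose_of_trivial] using hK.inv.mul_mul_conjTranspose_same hinj

lemma Matrix.PosSemidef.dotProduct_add_inv_mulVec_lt [DecidableEq ι] {A B : Matrix ι ι ℝ}
    (hA : A.PosSemidef) (hB : B.PosDef) {x : ι → ℝ} (hx : A *ᵥ x ≠ 0) :
    (A *ᵥ x) ⬝ᵥ ((A + B)⁻¹ *ᵥ (A *ᵥ x)) < x ⬝ᵥ (A *ᵥ x) := by
  set y := (A + B)⁻¹ *ᵥ (A *ᵥ x)
  have hTy : (A + B) *ᵥ y = A *ᵥ x := by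
    rw [mulVec_mulVec, mul_nonsing_inv _ ((hB.posSemidef_add hA).isUnit.map detMonoidHom),
      one_mulVec]
  have hy : y ≠ 0 := fun h => hx <| by rw [← hTy, h, mulVec_zero]
  have hAw : A *ᵥ (x - y) = B *ᵥ y := by
    rw [mulVec_sub, ← hTy, add_mulVec]; abel
  have hgap : x ⬝ᵥ (A *ᵥ x) - (A *ᵥ x) ⬝ᵥ y
      = (x - y) ⬝ᵥ (A *ᵥ (x - y)) + y ⬝ᵥ (B *ᵥ y) := by
    rw [← hAw, ← hA.isHermitian.dotProduct_mulVec_comm, ← dotProduct_sub, ← mulVec_sub,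
      ← add_dotProduct, sub_add_cancel]
  have h1 : 0 ≤ (x - y) ⬝ᵥ (A *ᵥ (x - y)) := by
    simpa using hA.dotProduct_mulVec_nonneg (x - y)
  have h2 : 0 < y ⬝ᵥ (B *ᵥ y) := by simpa using hB.dotProduct_mulVec_pos hy
  linarith

/-- The block `ℛ` of the preconditioner, written with `S = G K⁻¹ Gᵀ`. -/
noncomputable def preconditionerR [DecidableEq ι] (S Q C : Matrix ι ι ℝ) (η ζ k σ : ℝ) :
    Matrix ι ι ℝ :=
  -(1 / (σ * η)) • S + (1 / (σ * η ^ 2)) • (S * ((1 / η) • S + (1 / ζ) • Q)⁻¹ * S)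
    - (k / σ) • C

lemma eq_zero_of_preconditionerR_add_smul_mulVec_eq_zero [DecidableEq ι]
    {S Q C : Matrix ι ι ℝ} {η ζ k σ : ℝ} (hS : S.PosDef) (hQ : Q.PosDef) (hC : C.PosSemidef)
    (hη : 0 < η) (hζ : 0 < ζ) (hk : 0 < k) (hσ0 : σ ≠ 0) (hσ1 : σ < 1) {p : ι → ℝ}
    (hp : (preconditionerR S Q C η ζ k σ + k • C) *ᵥ p = 0) : p = 0 := by
  by_contra hp0
  unfold preconditionerR at hp
  set T := (1 / η) • S + (1 / ζ) • Q
  have ha : 0 < p ⬝ᵥ (S *ᵥ p) := by simpa using hS.dotProduct_mulVec_pos hp0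
  have hc : 0 ≤ p ⬝ᵥ (C *ᵥ p) := by simpa using hC.dotProduct_mulVec_nonneg p
  have hSp : S *ᵥ p ≠ 0 := fun h => by simp [h] at ha
  have hb : (S *ᵥ p) ⬝ᵥ (T⁻¹ *ᵥ (S *ᵥ p)) < η * (p ⬝ᵥ (S *ᵥ p)) := by
    have hAx : ((1 / η) • S) *ᵥ (η • p) = S *ᵥ p := by
      rw [smul_mulVec, mulVec_smul, smul_smul, one_div_mul_cancel hη.ne', one_smul]
    have := (hS.posSemidef.smul (one_div_pos.mpr hη).le).dotProduct_add_inv_mulVec_lt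
      (hQ.smul (one_div_pos.mpr hζ)) (hAx ▸ hSp)
    rwa [hAx, smul_dotProduct, smul_eq_mul] at this
  have hform : p ⬝ᵥ ((S * T⁻¹ * S) *ᵥ p) = (S *ᵥ p) ⬝ᵥ (T⁻¹ *ᵥ (S *ᵥ p)) := by
    rw [← mulVec_mulVec, ← mulVec_mulVec, hS.isHermitian.dotProduct_mulVec_comm]
  have hq : -(1 / (σ * η)) * (p ⬝ᵥ (S *ᵥ p)) + 1 / (σ * η ^ 2) * (S *ᵥ p) ⬝ᵥ (T⁻¹ *ᵥ (S *ᵥ p))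
      - k / σ * (p ⬝ᵥ (C *ᵥ p)) + k * (p ⬝ᵥ (C *ᵥ p)) = 0 := by
    have := congrArg (p ⬝ᵥ ·) hp
    simp only [add_mulVec, sub_mulVec, smul_mulVec, dotProduct_add,
      dotProduct_sub, dotProduct_smul, smul_eq_mul, dotProduct_zero, hform] at this
    exact this
  have hq' : (S *ᵥ p) ⬝ᵥ (T⁻¹ *ᵥ (S *ᵥ p)) - η * (p ⬝ᵥ (S *ᵥ p))
      + k * η ^ 2 * (σ - 1) * (p ⬝ᵥ (C *ᵥ p)) = 0 := by
    field_simp at hq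
    linear_combination hq
  nlinarith [mul_nonneg (mul_nonneg hk.le (sq_nonneg η)) hc]

end

theorem stmt6_general {n m : ℕ} (K : Matrix (Fin n) (Fin n) ℝ) (G : Matrix (Fin m) (Fin n) ℝ)
    (Q C : Matrix (Fin m) (Fin m) ℝ) (η ζ k σ : ℝ)
    (hK : K.PosDef) (hG : ∀ p : Fin m → ℝ, Gᵀ *ᵥ p = 0 → p = 0)
    (hQ : Q.PosDef) (hC : C.PosSemidef)
    (hη : 0 < η) (hζ : 0 < ζ) (hk : 0 < k)
    (hσ : σ < 0 ∨ (0 < σ ∧ σ < 1))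
    (S R : Matrix (Fin m) (Fin m) ℝ)
    (hS : S = G * K⁻¹ * Gᵀ)
    (hR : R = -(1 / (σ * η)) • S
        + (1 / (σ * η ^ 2)) • (S * ((1 / η) • S + (1 / ζ) • Q)⁻¹ * S)
        - (k / σ) • C)
    (u : Fin n → ℝ) (p pc : Fin m → ℝ)
    (h1 : η • (K *ᵥ u) + Gᵀ *ᵥ p + Gᵀ *ᵥ pc = (1 : ℝ) • (η • (K *ᵥ u)))
    (h2 : G *ᵥ u - k • (C *ᵥ p) = (1 : ℝ) • (G *ᵥ u + R *ᵥ p)) :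
    p = -pc ∧ (R + k • C) *ᵥ p = 0 ∧ p = 0 ∧ pc = 0 := by
  have hσ0 : σ ≠ 0 := by rcases hσ with h | ⟨h, _⟩ <;> [exact h.ne; exact h.ne']
  have hσ1 : σ < 1 := by rcases hσ with h | ⟨_, h⟩ <;> linarith
  have hppc : p = -pc :=
    eq_neg_of_add_eq_zero_left <| hG _ <| by rw [mulVec_add]; simpa [add_assoc] using h1
  have hRp : (R + k • C) *ᵥ p = 0 := by
    rw [add_mulVec, smul_mulVec]
    linear_combination (norm := module) -h2
  have hp : p = 0 := by
    subst hS hR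
    exact eq_zero_of_preconditionerR_add_smul_mulVec_eq_zero (hK.mul_inv_mul_transpose hG)
      hQ hC hη hζ hk hσ0 hσ1 hRp
  exact ⟨hppc, hRp, hp, neg_eq_zero.mp (hppc ▸ hp)⟩

theorem stmt6 {n m : ℕ} (K : Matrix (Fin n) (Fin n) ℝ) (G : Matrix (Fin m) (Fin n) ℝ)
    (Q C : Matrix (Fin m) (Fin m) ℝ) (η ζ k σ : ℝ)
    (hK : K.PosDef) (hG : ∀ p : Fin m → ℝ, Gᵀ *ᵥ p = 0 → p = 0)
    (hQ : Q.PosDef) (hC : C.PosSemidef)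
    (hη : 0 < η) (hζ : 0 < ζ) (hk : 0 < k)
    (hσ : σ < 0 ∨ (0 < σ ∧ σ < 1))
    (S R 𝒮 𝒯 : Matrix (Fin m) (Fin m) ℝ)
    (hS : S = G * K⁻¹ * Gᵀ)
    (hR : R = -(1 / (σ * η)) • S
        + (1 / (σ * η ^ 2)) • (S * ((1 / η) • S + (1 / ζ) • Q)⁻¹ * S)
        - (k / σ) • C)
    (h𝒮 : 𝒮 = -((1 / η) • S + ζ⁻¹ • Q))
    (h𝒯 : 𝒯 = -(1 / η) • S)
    (u : Fin n → ℝ) (p pc : Fin m → ℝ)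
    (h1 : η • (K *ᵥ u) + Gᵀ *ᵥ p + Gᵀ *ᵥ pc = (1 : ℝ) • (η • (K *ᵥ u)))
    (h2 : G *ᵥ u - k • (C *ᵥ p) = (1 : ℝ) • (G *ᵥ u + R *ᵥ p))
    (h3 : G *ᵥ u - ζ⁻¹ • (Q *ᵥ pc) = (1 : ℝ) • (G *ᵥ u + 𝒯 *ᵥ p + 𝒮 *ᵥ pc)) :
    p = -pc ∧ (R + k • C) *ᵥ p = 0 ∧ p = 0 ∧ pc = 0 :=
  stmt6_general K G Q C η ζ k σ hK hG hQ hC hη hζ hk hσ S R hS hR u p pc h1 h2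
end

section
/- Let 𝒫_t = [[η𝒦, 0, 0],[G, ℛ, 0],[G, 0, 𝒮]] be a block lower triangular matrix with 𝒦, -ℛ, -𝒮 symmetric positive definite. Then 𝒫_t⁻¹ 𝒜, for 𝒜 = [[ηK, G^T, G^T],[G, -kC, 0],[G, 0, -ζ⁻¹Q]], satisfies ℋ 𝒫_t⁻¹ 𝒜 = (𝒫_t⁻¹ 𝒜)^T ℋ where ℋ = diag(η(K - 𝒦), -ℛ, -𝒮); i.e., ℋ 𝒫_t⁻¹ 𝒜 is symmetric. -/
/-!
Write `𝒫 = [[A, 0], [B, D]]`, `𝒜 = [[K, Bᵀ], [B, E]]` and `ℋ = diag(K - A, -D)`. Inverting the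
block lower triangular `𝒫` and multiplying out gives
`ℋ 𝒫⁻¹ 𝒜 = [[K A⁻¹ K - K, (K A⁻¹ - 1) Bᵀ], [B (A⁻¹ K - 1), B A⁻¹ Bᵀ - E]]`,
in which the `-D` of `ℋ` has cancelled against the `D⁻¹` of `𝒫⁻¹`. This matrix is visibly
symmetric once `A`, `K`, `E` are; as `ℋ` is symmetric too, its transpose is `(𝒫⁻¹ 𝒜)ᵀ ℋ`.
-/

open Matrix

namespace Matrix

variable {m n α : Type*} [Fintype m] [Fintype n] [DecidableEq m] [DecidableEq n] [CommRing α]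

theorem fromBlocks_diag_mul_inv_fromBlocks_zero₁₂_mul {A K : Matrix m m α} {B : Matrix n m α}
    {C : Matrix m n α} {D E : Matrix n n α} (hA : IsUnit A) (hD : IsUnit D) :
    fromBlocks (K - A) 0 0 (-D) * ((fromBlocks A 0 B D)⁻¹ * fromBlocks K C B E) =
      fromBlocks (K * A⁻¹ * K - K) ((K * A⁻¹ - 1) * C) (B * (A⁻¹ * K - 1)) (B * A⁻¹ * C - E) := by
  have hA' : IsUnit A.det := (isUnit_iff_isUnit_det A).mp hA
  have hD' : IsUnit D.det := (isUnit_iff_isUnit_det D).mp hD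
  rw [inv_fromBlocks_zero₁₂_of_isUnit_iff _ _ _ (iff_of_true hA hD), fromBlocks_multiply,
    fromBlocks_multiply]
  simp only [Matrix.zero_mul, add_zero, zero_add, Matrix.mul_add, Matrix.sub_mul, Matrix.mul_sub,
    Matrix.neg_mul, Matrix.mul_neg, Matrix.mul_assoc, mul_nonsing_inv_cancel_left _ _ hD',
    mul_nonsing_inv_cancel_left _ _ hA', Matrix.mul_one, Matrix.one_mul]
  congr 1 <;> abel

theorem isSymm_fromBlocks_diag_mul_inv_fromBlocks_zero₁₂_mul {A K : Matrix m m α}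
    {B : Matrix n m α} {D E : Matrix n n α} (hA : IsUnit A) (hD : IsUnit D)
    (hAs : A.IsSymm) (hKs : K.IsSymm) (hEs : E.IsSymm) :
    (fromBlocks (K - A) 0 0 (-D) * ((fromBlocks A 0 B D)⁻¹ * fromBlocks K Bᵀ B E)).IsSymm := by
  have hAi : A⁻¹.IsSymm := by rw [IsSymm, transpose_nonsing_inv, hAs.eq]
  rw [fromBlocks_diag_mul_inv_fromBlocks_zero₁₂_mul hA hD]
  refine IsSymm.fromBlocks ?_ ?_ ?_
  · refine IsSymm.sub ?_ hKs
    simp only [IsSymm, transpose_mul, hKs.eq, hAi.eq, Matrix.mul_assoc]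
  · simp only [transpose_mul, transpose_sub, transpose_one, transpose_transpose, hKs.eq, hAi.eq]
  · refine IsSymm.sub ?_ hEs
    simp only [IsSymm, transpose_mul, transpose_transpose, hAi.eq, Matrix.mul_assoc]

theorem fromBlocks_diag_mul_inv_fromBlocks_zero₁₂_mul_comm {A K : Matrix m m α}
    {B : Matrix n m α} {D E : Matrix n n α} (hA : IsUnit A) (hD : IsUnit D)
    (hAs : A.IsSymm) (hKs : K.IsSymm) (hDs : D.IsSymm) (hEs : E.IsSymm) :
    fromBlocks (K - A) 0 0 (-D) * ((fromBlocks A 0 B D)⁻¹ * fromBlocks K Bᵀ B E) =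
      ((fromBlocks A 0 B D)⁻¹ * fromBlocks K Bᵀ B E)ᵀ * fromBlocks (K - A) 0 0 (-D) := by
  have hH : (fromBlocks (K - A) 0 0 (-D)).IsSymm :=
    IsSymm.fromBlocks (hKs.sub hAs) transpose_zero hDs.neg
  conv_rhs => rw [← hH.eq, ← transpose_mul]
  exact (isSymm_fromBlocks_diag_mul_inv_fromBlocks_zero₁₂_mul hA hD hAs hKs hEs).symm

end Matrix

theorem stmt8_general {n m : ℕ} (K 𝒦 : Matrix (Fin n) (Fin n) ℝ) (G : Matrix (Fin m) (Fin n) ℝ)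
    (Q C R S : Matrix (Fin m) (Fin m) ℝ) (η ζ k : ℝ)
    (hK : K.PosDef) (h𝒦 : 𝒦.PosDef) (hQ : Q.PosDef) (hC : C.PosSemidef)
    (hR : (-R).PosDef) (hS : (-S).PosDef)
    (hη : 0 < η)
    (𝒜 𝒫t ℋ : Matrix (Fin n ⊕ (Fin m ⊕ Fin m)) (Fin n ⊕ (Fin m ⊕ Fin m)) ℝ)
    (h𝒜 : 𝒜 = fromBlocks (η • K) (fromCols Gᵀ Gᵀ) (fromRows G G)
        (fromBlocks (-(k • C)) 0 0 (-(ζ⁻¹ • Q))))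
    (h𝒫t : 𝒫t = fromBlocks (η • 𝒦) 0 (fromRows G G) (fromBlocks R 0 0 S))
    (hℋ : ℋ = fromBlocks (η • (K - 𝒦)) 0 0 (fromBlocks (-R) 0 0 (-S))) :
    ℋ * (𝒫t⁻¹ * 𝒜) = (𝒫t⁻¹ * 𝒜)ᵀ * ℋ := by
  have hη𝒦 : (η • 𝒦).PosDef := h𝒦.smul hη
  have hRs : R.IsSymm := isSymm_neg_iff.mp (isHermitian_iff_isSymm.mp hR.isHermitian)
  have hSs : S.IsSymm := isSymm_neg_iff.mp (isHermitian_iff_isSymm.mp hS.isHermitian)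
  have hD : IsUnit (fromBlocks R 0 0 S) :=
    isUnit_fromBlocks_zero₁₂.mpr ⟨(IsUnit.neg_iff R).mp hR.isUnit, (IsUnit.neg_iff S).mp hS.isUnit⟩
  have hE : (fromBlocks (-(k • C)) 0 0 (-(ζ⁻¹ • Q))).IsSymm :=
    IsSymm.fromBlocks ((isHermitian_iff_isSymm.mp hC.isHermitian).smul k).neg transpose_zero
      ((isHermitian_iff_isSymm.mp hQ.isHermitian).smul ζ⁻¹).neg
  have key := fromBlocks_diag_mul_inv_fromBlocks_zero₁₂_mul_comm (B := fromRows G G)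
    hη𝒦.isUnit hD (isHermitian_iff_isSymm.mp hη𝒦.isHermitian)
    ((isHermitian_iff_isSymm.mp hK.isHermitian).smul η) (IsSymm.fromBlocks hRs transpose_zero hSs)
    hE
  rw [← smul_sub, transpose_fromRows, fromBlocks_neg, neg_zero] at key
  rwa [h𝒜, h𝒫t, hℋ]

theorem stmt8 {n m : ℕ} (K 𝒦 : Matrix (Fin n) (Fin n) ℝ) (G : Matrix (Fin m) (Fin n) ℝ)
    (Q C R S : Matrix (Fin m) (Fin m) ℝ) (η ζ k : ℝ)
    (hK : K.PosDef) (h𝒦 : 𝒦.PosDef) (hQ : Q.PosDef) (hC : C.PosSemidef)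
    (hR : (-R).PosDef) (hS : (-S).PosDef)
    (hη : 0 < η) (hζ : 0 < ζ) (hk : 0 < k)
    (𝒜 𝒫t ℋ : Matrix (Fin n ⊕ (Fin m ⊕ Fin m)) (Fin n ⊕ (Fin m ⊕ Fin m)) ℝ)
    (h𝒜 : 𝒜 = fromBlocks (η • K) (fromCols Gᵀ Gᵀ) (fromRows G G)
        (fromBlocks (-(k • C)) 0 0 (-(ζ⁻¹ • Q))))
    (h𝒫t : 𝒫t = fromBlocks (η • 𝒦) 0 (fromRows G G) (fromBlocks R 0 0 S))
    (hℋ : ℋ = fromBlocks (η • (K - 𝒦)) 0 0 (fromBlocks (-R) 0 0 (-S))) :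
    ℋ * (𝒫t⁻¹ * 𝒜) = (𝒫t⁻¹ * 𝒜)ᵀ * ℋ :=
  stmt8_general K 𝒦 G Q C R S η ζ k hK h𝒦 hQ hC hR hS hη 𝒜 𝒫t ℋ h𝒜 h𝒫t hℋ
end

section
/- Let A, P, H be square matrices with P and H invertible. If there exist positive constants C₀, C₁ such that C₀ H ≤ H P⁻¹ A ≤ C₁ H in the sense of symmetric positive semi-definiteness (all three differences being symmetric), then the spectrum of P⁻¹A is real and contained in [C₀, C₁]. -/
/-! For an eigenpair `M v = μ v` with `v ≠ 0`, `v* (H M - c H) v = (μ - c) v* H v` and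
`v* H v > 0`, so `H M - c H ≥ 0` forces `c ≤ μ` in the partial order of `ℂ`; this order
comparison also makes `μ` real. -/

open Matrix
open scoped ComplexOrder

namespace Matrix

variable {n 𝕜 : Type*} [Fintype n] [RCLike 𝕜]

theorem PosSemidef.map_algebraMap {S : Matrix n n ℝ} (hS : S.PosSemidef) :
    (S.map (algebraMap ℝ 𝕜)).PosSemidef := by
  classical
  obtain ⟨B, rfl⟩ : ∃ B : Matrix n n ℝ, S = Bᴴ * B := by
    open scoped MatrixOrder in
    exact CStarAlgebra.nonneg_iff_eq_star_mul_self.mp hS.nonneg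
  rw [Matrix.map_mul, conjTranspose_map _ fun x => by simp]
  exact posSemidef_conjTranspose_mul_self _

theorem PosDef.map_algebraMap [DecidableEq n] {S : Matrix n n ℝ} (hS : S.PosDef) :
    (S.map (algebraMap ℝ 𝕜)).PosDef :=
  hS.posSemidef.map_algebraMap.posDef_iff_isUnit.mpr
    (hS.isUnit.map (algebraMap ℝ 𝕜).mapMatrix)

theorem exists_mulVec_eq_smul_of_mem_spectrum {K : Type*} [Field K] [DecidableEq n]
    {M : Matrix n n K} {μ : K} (hμ : μ ∈ spectrum K M) : ∃ v ≠ 0, M *ᵥ v = μ • v := by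
  rw [← spectrum_toLin', ← Module.End.hasEigenvalue_iff_mem_spectrum] at hμ
  obtain ⟨v, hv⟩ := hμ.exists_hasEigenvector
  exact ⟨v, hv.2, by simpa using hv.apply_eq_smul⟩

theorem le_of_mulVec_eq_smul_of_posSemidef_mul_sub_smul {H M : Matrix n n 𝕜} (hH : H.PosDef)
    {c μ : 𝕜} {v : n → 𝕜} (hv : v ≠ 0) (hMv : M *ᵥ v = μ • v)
    (h : (H * M - c • H).PosSemidef) : c ≤ μ := by
  have ht : 0 < star v ⬝ᵥ H *ᵥ v := hH.dotProduct_mulVec_pos hv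
  have hq : star v ⬝ᵥ (H * M - c • H) *ᵥ v = (μ - c) * (star v ⬝ᵥ H *ᵥ v) := by
    simp only [sub_mulVec, ← mulVec_mulVec, hMv, mulVec_smul, smul_mulVec, dotProduct_sub,
      dotProduct_smul, smul_eq_mul, sub_mul]
  have hprod := mul_nonneg (hq ▸ h.dotProduct_mulVec_nonneg v) (RCLike.inv_pos_of_pos ht).le
  rwa [mul_inv_cancel_right₀ ht.ne', sub_nonneg] at hprod

theorem le_of_mulVec_eq_smul_of_posSemidef_smul_sub_mul {H M : Matrix n n 𝕜} (hH : H.PosDef)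
    {c μ : 𝕜} {v : n → 𝕜} (hv : v ≠ 0) (hMv : M *ᵥ v = μ • v)
    (h : (c • H - H * M).PosSemidef) : μ ≤ c := by
  refine neg_le_neg_iff.mp (le_of_mulVec_eq_smul_of_posSemidef_mul_sub_smul (M := -M) hH hv
    (by rw [neg_mulVec, hMv, neg_smul]) ?_)
  rwa [mul_neg, neg_smul, sub_neg_eq_add, add_comm, ← sub_eq_add_neg]

variable [DecidableEq n] {H M : Matrix n n ℝ} {c : ℝ} {μ : 𝕜}

theorem algebraMap_le_of_mem_spectrum_map (hH : H.PosDef)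
    (hμ : μ ∈ spectrum 𝕜 (M.map (algebraMap ℝ 𝕜))) (h : (H * M - c • H).PosSemidef) :
    algebraMap ℝ 𝕜 c ≤ μ := by
  obtain ⟨v, hv, hMv⟩ := exists_mulVec_eq_smul_of_mem_spectrum hμ
  refine le_of_mulVec_eq_smul_of_posSemidef_mul_sub_smul hH.map_algebraMap hv hMv ?_
  simpa [Matrix.map_sub, Matrix.map_mul, Matrix.map_smul] using h.map_algebraMap (𝕜 := 𝕜)

theorem le_algebraMap_of_mem_spectrum_map (hH : H.PosDef)
    (hμ : μ ∈ spectrum 𝕜 (M.map (algebraMap ℝ 𝕜))) (h : (c • H - H * M).PosSemidef) :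
    μ ≤ algebraMap ℝ 𝕜 c := by
  obtain ⟨v, hv, hMv⟩ := exists_mulVec_eq_smul_of_mem_spectrum hμ
  refine le_of_mulVec_eq_smul_of_posSemidef_smul_sub_mul hH.map_algebraMap hv hMv ?_
  simpa [Matrix.map_sub, Matrix.map_mul, Matrix.map_smul] using h.map_algebraMap (𝕜 := 𝕜)

end Matrix

theorem stmt10_general {N : ℕ} (A P H : Matrix (Fin N) (Fin N) ℝ)
    (hHdef : H.PosDef)
    (C₀ C₁ : ℝ)
    (hlow : (H * (P⁻¹ * A) - C₀ • H).PosSemidef)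
    (hup : (C₁ • H - H * (P⁻¹ * A)).PosSemidef) :
    ∀ μ : ℂ, μ ∈ spectrum ℂ ((P⁻¹ * A).map (algebraMap ℝ ℂ)) →
      μ.im = 0 ∧ C₀ ≤ μ.re ∧ μ.re ≤ C₁ := by
  intro μ hμ
  obtain ⟨hre₀, him⟩ := Complex.le_def.mp (algebraMap_le_of_mem_spectrum_map hHdef hμ hlow)
  obtain ⟨hre₁, -⟩ := Complex.le_def.mp (le_algebraMap_of_mem_spectrum_map hHdef hμ hup)
  exact ⟨by simpa using him.symm, by simpa using hre₀, by simpa using hre₁⟩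

theorem stmt10 {N : ℕ} (A P H : Matrix (Fin N) (Fin N) ℝ)
    (hP : IsUnit P.det) (hHdef : H.PosDef)
    (hsym : (H * (P⁻¹ * A)).IsSymm)
    (C₀ C₁ : ℝ) (hC₀ : 0 < C₀) (hC₁ : 0 < C₁)
    (hlow : (H * (P⁻¹ * A) - C₀ • H).PosSemidef)
    (hup : (C₁ • H - H * (P⁻¹ * A)).PosSemidef) :
    ∀ μ : ℂ, μ ∈ spectrum ℂ ((P⁻¹ * A).map (algebraMap ℝ ℂ)) →
      μ.im = 0 ∧ C₀ ≤ μ.re ∧ μ.re ≤ C₁ :=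
  stmt10_general A P H hHdef C₀ C₁ hlow hup
end

section
/- For block vectors x = (u, p, p_c) and the matrix ℒ H̃ ℒ^T = [[ηK, G^T, G^T],[G, 2η⁻¹S̄ + kC, 2η⁻¹S̄],[G, 2η⁻¹S̄, 2η⁻¹S̄ + ζ⁻¹Q]] with K SPD and S̄ = G K⁻¹ G^T, the Cauchy–Schwarz/Young estimates give: |p^T G u| ≤ ½(p^T(η⁻¹S̄ + kC)p + η u^T K u), |p_c^T G u| ≤ ½(p_c^T(η⁻¹S̄ + ζ⁻¹Q)p_c + η u^T K u), and |p_c^T S̄ p| ≤ ½(p_c^T S̄ p_c + p^T S̄ p); consequently x^T ℒ H̃ ℒ^T x ≤ 3η u^T K u + 5 p^T(η⁻¹S̄ + kC)p + 5 p_c^T(η⁻¹S̄ + ζ⁻¹Q)p_c. -/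
/-!
Every cross term of the block quadratic form is bounded by Young's inequality
`2 xᵀ A y ≤ xᵀ A x + yᵀ A y` for a positive semidefinite `A`. For the terms in `G` one writes
`pᵀ G u = (K⁻¹ Gᵀ p)ᵀ K u` and uses the weighted form of the inequality for `K`, which turns the
`p`-side into `η⁻¹ pᵀ S̄ p`. Adding these bounds to the diagonal blocks gives the constants 3 and 5.
-/

open Matrix

namespace Matrix

variable {ι κ : Type*} [Fintype ι] [Fintype κ]

theorem sumElim_dotProduct_fromBlocks_mulVec_sumElim (A : Matrix ι ι ℝ) (B : Matrix ι κ ℝ)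
    (C : Matrix κ ι ℝ) (D : Matrix κ κ ℝ) (u : ι → ℝ) (v : κ → ℝ) :
    Sum.elim u v ⬝ᵥ (fromBlocks A B C D *ᵥ Sum.elim u v) =
      u ⬝ᵥ (A *ᵥ u) + u ⬝ᵥ (B *ᵥ v) + (v ⬝ᵥ (C *ᵥ u) + v ⬝ᵥ (D *ᵥ v)) := by
  simp only [fromBlocks_mulVec, Sum.elim_comp_inl, Sum.elim_comp_inr,
    sumElim_dotProduct_sumElim, dotProduct_add]

theorem IsHermitian.dotProduct_mulVec_comm_s13 {S : Matrix ι ι ℝ} (hS : S.IsHermitian)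
    (x y : ι → ℝ) : x ⬝ᵥ (S *ᵥ y) = y ⬝ᵥ (S *ᵥ x) := by
  rw [dotProduct_mulVec, ← mulVec_transpose, dotProduct_comm,
    ← conjTranspose_eq_transpose_of_trivial, hS.eq]

theorem PosSemidef.two_mul_dotProduct_mulVec_le {S : Matrix ι ι ℝ} (hS : S.PosSemidef)
    (x y : ι → ℝ) : 2 * (x ⬝ᵥ (S *ᵥ y)) ≤ x ⬝ᵥ (S *ᵥ x) + y ⬝ᵥ (S *ᵥ y) := by
  have h := hS.dotProduct_mulVec_nonneg (x - y)
  simp only [star_trivial, mulVec_sub, dotProduct_sub, sub_dotProduct,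
    hS.isHermitian.dotProduct_mulVec_comm_s13 y x] at h
  linarith

theorem PosSemidef.abs_dotProduct_mulVec_le {S : Matrix ι ι ℝ} (hS : S.PosSemidef)
    (x y : ι → ℝ) : |x ⬝ᵥ (S *ᵥ y)| ≤ (x ⬝ᵥ (S *ᵥ x) + y ⬝ᵥ (S *ᵥ y)) / 2 := by
  have h₁ := hS.two_mul_dotProduct_mulVec_le x y
  have h₂ := hS.two_mul_dotProduct_mulVec_le (-x) y
  simp only [neg_dotProduct, mulVec_neg, dotProduct_neg, neg_neg] at h₂
  rw [abs_le]
  constructor <;> linarith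

theorem PosSemidef.abs_dotProduct_mulVec_le_weighted {S : Matrix ι ι ℝ} (hS : S.PosSemidef)
    {t : ℝ} (ht : 0 < t) (x y : ι → ℝ) :
    |x ⬝ᵥ (S *ᵥ y)| ≤ (t⁻¹ * (x ⬝ᵥ (S *ᵥ x)) + t * (y ⬝ᵥ (S *ᵥ y))) / 2 := by
  have h := hS.abs_dotProduct_mulVec_le x (t • y)
  simp only [mulVec_smul, dotProduct_smul, smul_dotProduct, smul_eq_mul, abs_mul,
    abs_of_pos ht] at h
  rw [← mul_le_mul_iff_right₀ ht]
  field_simp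
  nlinarith

section Inverse

variable [DecidableEq ι]

theorem PosDef.abs_dotProduct_le {K : Matrix ι ι ℝ} (hK : K.PosDef) {t : ℝ} (ht : 0 < t)
    (a u : ι → ℝ) :
    |a ⬝ᵥ u| ≤ (t⁻¹ * (a ⬝ᵥ (K⁻¹ *ᵥ a)) + t * (u ⬝ᵥ (K *ᵥ u))) / 2 := by
  have hKK : K *ᵥ (K⁻¹ *ᵥ a) = a := by
    rw [mulVec_mulVec, mul_nonsing_inv _ ((isUnit_iff_isUnit_det K).mp hK.isUnit), one_mulVec]
  have h := hK.posSemidef.abs_dotProduct_mulVec_le_weighted ht (K⁻¹ *ᵥ a) u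
  rwa [hK.isHermitian.dotProduct_mulVec_comm_s13 _ u, hKK, dotProduct_comm u,
    dotProduct_comm (K⁻¹ *ᵥ a)] at h

theorem PosDef.posSemidef_mul_inv_mul_transpose {K : Matrix ι ι ℝ} (hK : K.PosDef)
    (G : Matrix κ ι ℝ) : (G * K⁻¹ * Gᵀ).PosSemidef := by
  simpa using hK.inv.posSemidef.mul_mul_conjTranspose_same G

theorem PosDef.abs_dotProduct_mulVec_le_mul_inv_mul_transpose {K : Matrix ι ι ℝ}
    (hK : K.PosDef) {t : ℝ} (ht : 0 < t) (G : Matrix κ ι ℝ) (p : κ → ℝ) (u : ι → ℝ) :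
    |p ⬝ᵥ (G *ᵥ u)| ≤
      (t⁻¹ * (p ⬝ᵥ ((G * K⁻¹ * Gᵀ) *ᵥ p)) + t * (u ⬝ᵥ (K *ᵥ u))) / 2 := by
  have hGu : p ⬝ᵥ (G *ᵥ u) = (Gᵀ *ᵥ p) ⬝ᵥ u := by rw [dotProduct_mulVec, mulVec_transpose]
  have hS : p ⬝ᵥ ((G * K⁻¹ * Gᵀ) *ᵥ p) = (Gᵀ *ᵥ p) ⬝ᵥ (K⁻¹ *ᵥ (Gᵀ *ᵥ p)) := by
    rw [← mulVec_mulVec, ← mulVec_mulVec, dotProduct_mulVec, mulVec_transpose, dotProduct_mulVec]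
  rw [hGu, hS]
  exact hK.abs_dotProduct_le ht _ u

end Inverse

end Matrix

theorem stmt13 {n m : ℕ} (K : Matrix (Fin n) (Fin n) ℝ) (G : Matrix (Fin m) (Fin n) ℝ)
    (C Q : Matrix (Fin m) (Fin m) ℝ) (η ζ k : ℝ)
    (hK : K.PosDef) (hC : C.PosSemidef) (hQ : Q.PosDef)
    (hη : 0 < η) (hζ : 0 < ζ) (hk : 0 < k)
    (S : Matrix (Fin m) (Fin m) ℝ) (hS : S = G * K⁻¹ * Gᵀ)
    (M : Matrix (Fin n ⊕ (Fin m ⊕ Fin m)) (Fin n ⊕ (Fin m ⊕ Fin m)) ℝ)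
    (hM : M = fromBlocks (η • K) (fromCols Gᵀ Gᵀ) (fromRows G G)
        (fromBlocks ((2 * η⁻¹) • S + k • C) ((2 * η⁻¹) • S)
          ((2 * η⁻¹) • S) ((2 * η⁻¹) • S + ζ⁻¹ • Q)))
    (u : Fin n → ℝ) (p pc : Fin m → ℝ)
    (x : Fin n ⊕ (Fin m ⊕ Fin m) → ℝ) (hx : x = Sum.elim u (Sum.elim p pc)) :
    |p ⬝ᵥ (G *ᵥ u)| ≤
      (p ⬝ᵥ ((η⁻¹ • S + k • C) *ᵥ p) + η * (u ⬝ᵥ (K *ᵥ u))) / 2 ∧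
    |pc ⬝ᵥ (G *ᵥ u)| ≤
      (pc ⬝ᵥ ((η⁻¹ • S + ζ⁻¹ • Q) *ᵥ pc) + η * (u ⬝ᵥ (K *ᵥ u))) / 2 ∧
    |pc ⬝ᵥ (S *ᵥ p)| ≤ (pc ⬝ᵥ (S *ᵥ pc) + p ⬝ᵥ (S *ᵥ p)) / 2 ∧
    x ⬝ᵥ (M *ᵥ x) ≤ 3 * η * (u ⬝ᵥ (K *ᵥ u))
      + 5 * (p ⬝ᵥ ((η⁻¹ • S + k • C) *ᵥ p))
      + 5 * (pc ⬝ᵥ ((η⁻¹ • S + ζ⁻¹ • Q) *ᵥ pc)) := by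
  have hSpsd : S.PosSemidef := hS ▸ hK.posSemidef_mul_inv_mul_transpose G
  have hGu (q : Fin m → ℝ) :
      |q ⬝ᵥ (G *ᵥ u)| ≤ (η⁻¹ * (q ⬝ᵥ (S *ᵥ q)) + η * (u ⬝ᵥ (K *ᵥ u))) / 2 :=
    hS ▸ hK.abs_dotProduct_mulVec_le_mul_inv_mul_transpose hη G q u
  have hSp := hSpsd.abs_dotProduct_mulVec_le pc p
  have hηS : η⁻¹ * (pc ⬝ᵥ (S *ᵥ p)) ≤ η⁻¹ * ((pc ⬝ᵥ (S *ᵥ pc) + p ⬝ᵥ (S *ᵥ p)) / 2) :=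
    mul_le_mul_of_nonneg_left ((le_abs_self _).trans hSp) (inv_pos.mpr hη).le
  have hCp : 0 ≤ k * (p ⬝ᵥ (C *ᵥ p)) :=
    mul_nonneg hk.le (by simpa using hC.dotProduct_mulVec_nonneg p)
  have hQpc : 0 ≤ ζ⁻¹ * (pc ⬝ᵥ (Q *ᵥ pc)) :=
    mul_nonneg (inv_pos.mpr hζ).le (by simpa using hQ.posSemidef.dotProduct_mulVec_nonneg pc)
  have hGt (q : Fin m → ℝ) : u ⬝ᵥ (Gᵀ *ᵥ q) = q ⬝ᵥ (G *ᵥ u) := by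
    rw [mulVec_transpose, dotProduct_comm, dotProduct_mulVec]
  subst hM hx
  simp only [sumElim_dotProduct_fromBlocks_mulVec_sumElim, fromCols_mulVec_sumElim,
    fromRows_mulVec, sumElim_dotProduct_sumElim, add_mulVec, smul_mulVec, dotProduct_add,
    dotProduct_smul, smul_eq_mul]
  rw [hGt, hGt, hSpsd.isHermitian.dotProduct_mulVec_comm_s13 p pc]
  refine ⟨by linarith [hGu p], by linarith [hGu pc], hSp, ?_⟩
  linarith [le_abs_self (p ⬝ᵥ (G *ᵥ u)), le_abs_self (pc ⬝ᵥ (G *ᵥ u)), hGu p, hGu pc]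
end
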